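/- arXiv:1905.06506 — 2 statements merged into one kernel-verified Lean document; each statement's English description precedes it below -/
import Mathlib

section
/- Let χ be a quartic Dirichlet character modulo 13 (i.e. χ has exact order 4), and let ψ = χ² be the quadratic character modulo 13. Then for every integer n ≥ 0, ∑_{j=0}^{n} δ_χ(j)·δ_χ(n−j) = −(χ(2)/2)·σ̃_13(n) + ((2 + 3χ(2))/2)·σ̂_13(n), where σ̃_13(0) = −1 and σ̂_13(0) = 0. -/
/-!
For n > 0, expanding δ_χ(j) δ_χ(n - j) turns the convolution into 2 δ_χ(0) ∑_{d ∣ n} χ(d) plus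
the sum of χ(a) χ(b) over the representations n = a x + b y in positive integers. Liouville's
elementary method evaluates such sums: splitting ∑ F(a, b) over the representations once by the
order of a and b and once by the order of x and y, and matching the pieces through
(a, x, b, y) ↦ (b, y, a, x) and (a, x, b, y) ↦ (a - b, x, b, x + y), shows that for every F the
terms F(a, b) + F(b, a) - F(a - b, b) - F(b, a - b) summed over b < a equal
∑_{m ∣ n} ∑_{a + b = m} F(a, b) - ∑_{d ∣ n} (n/d - 1) F(d, d).
So it suffices to find a function h on (ℤ/13)² for which those terms are 4 χ(a) χ(b) and whose
line sums ∑_{a + b = m} h(a, b) are explicit. Normalising χ(2) = i, such an h with values in ℤ[i]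
exists and all its properties are finite checks; they are carried to ℂ by the ring map ℤ[i] → ℂ
sending i to χ(2), which is a square root of -1 because χ has order 4.
-/

open Finset

/-- `δ_χ(n) = ∑_{0<d∣n} χ(d)` for `n ≥ 1`, and
`δ_χ(0) = −(1/(2N)) ∑_{a=1}^{N−1} χ(a)·a`. -/
noncomputable def deltaChar {N : ℕ} (χ : DirichletCharacter ℂ N) (n : ℕ) : ℂ :=
  if n = 0 then -(1 / (2 * (N : ℂ))) * ∑ a ∈ Finset.range N, χ a * a
  else ∑ d ∈ n.divisors, χ d

/-- `σ̃_p(n) = ∑_{0<d∣n} ψ(d)·d` for `n ≥ 1`, with prescribed value `c` at `n = 0`. -/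
noncomputable def sigmaTilde {N : ℕ} (ψ : DirichletCharacter ℂ N) (c : ℂ) (n : ℕ) : ℂ :=
  if n = 0 then c else ∑ d ∈ n.divisors, ψ d * d

/-- `σ̂_p(n) = ∑_{0<d∣n} ψ(d)·(n/d)` for `n ≥ 1`, and `σ̂_p(0) = 0`. -/
noncomputable def sigmaHat {N : ℕ} (ψ : DirichletCharacter ℂ N) (n : ℕ) : ℂ :=
  if n = 0 then 0 else ∑ d ∈ n.divisors, ψ d * ((n / d : ℕ) : ℂ)

theorem Finset.sum_eq_sum_filter_lt_add_sum_filter_gt_add_sum_filter_eq {ι α M : Type*}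
    [LinearOrder α] [AddCommMonoid M] (s : Finset ι) (f : ι → M) (u v : ι → α) :
    ∑ i ∈ s, f i = ∑ i ∈ s with u i < v i, f i + ∑ i ∈ s with v i < u i, f i
      + ∑ i ∈ s with u i = v i, f i := by
  simp only [sum_filter, ← sum_add_distrib]
  refine sum_congr rfl fun i _ => ?_
  rcases lt_trichotomy (u i) (v i) with h | h | h
  · simp [h, h.not_gt, h.ne]
  · simp [h]
  · simp [h, h.not_gt, h.ne']

def twoProductReps (n : ℕ) : Finset ((ℕ × ℕ) × (ℕ × ℕ)) :=
  {p ∈ (range (n + 1) ×ˢ range (n + 1)) ×ˢ (range (n + 1) ×ˢ range (n + 1)) |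
    p.1.1 * p.1.2 + p.2.1 * p.2.2 = n ∧ 0 < p.1.1 ∧ 0 < p.1.2 ∧ 0 < p.2.1 ∧ 0 < p.2.2}

@[simp]
theorem mem_twoProductReps {n a x b y : ℕ} :
    ((a, x), (b, y)) ∈ twoProductReps n ↔ a * x + b * y = n ∧ 0 < a ∧ 0 < x ∧ 0 < b ∧ 0 < y := by
  simp only [twoProductReps, mem_filter, mem_product, mem_range, and_iff_right_iff_imp]
  rintro ⟨rfl, ha, hx, hb, hy⟩
  have := Nat.le_mul_of_pos_right a hx
  have := Nat.le_mul_of_pos_left x ha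
  have := Nat.le_mul_of_pos_right b hy
  have := Nat.le_mul_of_pos_left y hb
  omega

namespace twoProductReps

variable {n : ℕ}

section AddCommMonoid

variable {M : Type*} [AddCommMonoid M]

theorem sum_filter_swap (P : (ℕ × ℕ) × (ℕ × ℕ) → Prop) [DecidablePred P]
    (G : (ℕ × ℕ) × (ℕ × ℕ) → M) :
    ∑ p ∈ twoProductReps n with P p.swap, G p.swap = ∑ p ∈ twoProductReps n with P p, G p :=
  sum_equiv (Equiv.prodComm _ _)
    (fun ⟨(a, x), (b, y)⟩ => by simp [add_comm, and_comm, and_left_comm, and_assoc])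
    (fun _ _ => rfl)

theorem sum_filter_transpose (P : (ℕ × ℕ) × (ℕ × ℕ) → Prop) [DecidablePred P]
    (G : (ℕ × ℕ) × (ℕ × ℕ) → M) :
    ∑ p ∈ twoProductReps n with P (p.1.swap, p.2.swap), G (p.1.swap, p.2.swap)
      = ∑ p ∈ twoProductReps n with P p, G p :=
  sum_equiv (Equiv.prodCongr (Equiv.prodComm _ _) (Equiv.prodComm _ _))
    (fun ⟨(a, x), (b, y)⟩ => by simp [mul_comm, and_comm, and_left_comm]) (fun _ _ => rfl)

theorem sum_filter_fst_eq (G : (ℕ × ℕ) × (ℕ × ℕ) → M) :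
    ∑ p ∈ twoProductReps n with p.1.1 = p.2.1, G p
      = ∑ q ∈ n.divisorsAntidiagonal, ∑ x ∈ Ico 1 q.2, G ((q.1, x), (q.1, q.2 - x)) := by
  rw [sum_sigma']
  refine sum_nbij' (fun p => ⟨(p.1.1, p.1.2 + p.2.2), p.1.2⟩)
    (fun q => ((q.1.1, q.2), (q.1.1, q.1.2 - q.2))) ?_ ?_ ?_ ?_ ?_
  · rintro ⟨⟨a, x⟩, ⟨b, y⟩⟩ hp
    simp only [mem_filter, mem_twoProductReps] at hp
    obtain ⟨⟨rfl, ha, hx, -, hy⟩, rfl⟩ := hp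
    simp only [mem_sigma, Nat.mem_divisorsAntidiagonal, mem_Ico]
    refine ⟨⟨by ring, by positivity⟩, hx, by omega⟩
  · rintro ⟨⟨d, m⟩, x⟩ hq
    simp only [mem_sigma, Nat.mem_divisorsAntidiagonal, mem_Ico] at hq
    obtain ⟨⟨rfl, hn⟩, hx, hxm⟩ := hq
    simp only [mem_filter, mem_twoProductReps, and_true]
    have hd : 0 < d := Nat.pos_of_ne_zero (left_ne_zero_of_mul hn)
    exact ⟨by rw [← mul_add]; congr 1; omega, hd, hx, hd, by omega⟩
  · rintro ⟨⟨a, x⟩, ⟨b, y⟩⟩ hp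
    simp only [mem_filter, mem_twoProductReps] at hp
    obtain ⟨⟨-, -, -, -, -⟩, rfl⟩ := hp
    simp
  · rintro ⟨⟨d, m⟩, x⟩ hq
    simp only [mem_sigma, Nat.mem_divisorsAntidiagonal, mem_Ico] at hq
    simp only [Sigma.mk.injEq, Prod.mk.injEq, heq_eq_eq, and_true, true_and]
    omega
  · rintro ⟨⟨a, x⟩, ⟨b, y⟩⟩ hp
    simp only [mem_filter, mem_twoProductReps] at hp
    obtain ⟨⟨-, -, -, -, -⟩, rfl⟩ := hp
    simp

theorem sum_filter_snd_lt (G : (ℕ × ℕ) × (ℕ × ℕ) → M) :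
    ∑ p ∈ twoProductReps n with p.1.2 < p.2.2, G p
      = ∑ p ∈ twoProductReps n with p.2.1 < p.1.1,
          G ((p.1.1 - p.2.1, p.1.2), (p.2.1, p.1.2 + p.2.2)) := by
  symm
  refine sum_nbij' (fun p => ((p.1.1 - p.2.1, p.1.2), (p.2.1, p.1.2 + p.2.2)))
    (fun p => ((p.1.1 + p.2.1, p.1.2), (p.2.1, p.2.2 - p.1.2))) ?_ ?_ ?_ ?_ (fun _ _ => rfl)
  · rintro ⟨⟨a, x⟩, ⟨b, y⟩⟩ hp
    simp only [mem_filter, mem_twoProductReps] at hp ⊢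
    obtain ⟨⟨rfl, ha, hx, hb, hy⟩, hba⟩ := hp
    refine ⟨⟨?_, by omega, hx, hb, by omega⟩, by omega⟩
    rw [Nat.sub_mul, mul_add]
    have := Nat.mul_le_mul_right x hba.le
    omega
  · rintro ⟨⟨a, x⟩, ⟨b, y⟩⟩ hp
    simp only [mem_filter, mem_twoProductReps] at hp ⊢
    obtain ⟨⟨rfl, ha, hx, hb, hy⟩, hxy⟩ := hp
    refine ⟨⟨?_, by omega, hx, hb, by omega⟩, by omega⟩
    rw [add_mul, Nat.mul_sub]
    have := Nat.mul_le_mul_left b hxy.le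
    omega
  · rintro ⟨⟨a, x⟩, ⟨b, y⟩⟩ hp
    simp only [mem_filter, mem_twoProductReps] at hp
    simp only [Prod.mk.injEq, and_true, true_and]
    omega
  · rintro ⟨⟨a, x⟩, ⟨b, y⟩⟩ hp
    simp only [mem_filter, mem_twoProductReps] at hp
    simp only [Prod.mk.injEq, and_true, true_and]
    omega

theorem sum_filter_fst_eq_diag (F : ℕ → ℕ → M) :
    ∑ p ∈ twoProductReps n with p.1.1 = p.2.1, F p.1.1 p.2.1
      = ∑ d ∈ n.divisors, (n / d - 1) • F d d := by
  rw [sum_filter_fst_eq, ← Nat.sum_divisorsAntidiagonal (fun d m => (m - 1) • F d d)]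
  simp only [sum_const, Nat.card_Ico]

theorem sum_of_symm (F : ℕ → ℕ → M) (hF : ∀ a b, F a b = F b a) :
    ∑ p ∈ twoProductReps n, F p.1.1 p.2.1
      = 2 • ∑ p ∈ twoProductReps n with p.2.1 < p.1.1, F p.1.1 p.2.1
        + ∑ d ∈ n.divisors, (n / d - 1) • F d d := by
  have h_lt : ∑ p ∈ twoProductReps n with p.1.1 < p.2.1, F p.1.1 p.2.1
      = ∑ p ∈ twoProductReps n with p.2.1 < p.1.1, F p.1.1 p.2.1 := by
    rw [← sum_filter_swap]
    exact sum_congr rfl fun p _ => hF _ _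
  rw [sum_eq_sum_filter_lt_add_sum_filter_gt_add_sum_filter_eq _ _ (fun p => p.1.1)
    (fun p => p.2.1), h_lt, sum_filter_fst_eq_diag, two_nsmul]

end AddCommMonoid

theorem liouville_identity {M : Type*} [AddCommGroup M] (F : ℕ → ℕ → M) :
    ∑ p ∈ twoProductReps n with p.2.1 < p.1.1,
        (F p.1.1 p.2.1 + F p.2.1 p.1.1 - F (p.1.1 - p.2.1) p.2.1 - F p.2.1 (p.1.1 - p.2.1))
      = ∑ m ∈ n.divisors, ∑ x ∈ Ico 1 m, F x (m - x) - ∑ d ∈ n.divisors, (n / d - 1) • F d d := by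
  have h_ab := sum_eq_sum_filter_lt_add_sum_filter_gt_add_sum_filter_eq (twoProductReps n)
    (fun p => F p.1.1 p.2.1) (fun p => p.1.1) (fun p => p.2.1)
  have h_xy := sum_eq_sum_filter_lt_add_sum_filter_gt_add_sum_filter_eq (twoProductReps n)
    (fun p => F p.1.1 p.2.1) (fun p => p.1.2) (fun p => p.2.2)
  have h_ab_lt : ∑ p ∈ twoProductReps n with p.1.1 < p.2.1, F p.1.1 p.2.1
      = ∑ p ∈ twoProductReps n with p.2.1 < p.1.1, F p.2.1 p.1.1 :=
    sum_filter_swap (fun p => p.2.1 < p.1.1) (fun p => F p.2.1 p.1.1)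
  have h_xy_lt : ∑ p ∈ twoProductReps n with p.1.2 < p.2.2, F p.1.1 p.2.1
      = ∑ p ∈ twoProductReps n with p.2.1 < p.1.1, F (p.1.1 - p.2.1) p.2.1 :=
    sum_filter_snd_lt (fun p => F p.1.1 p.2.1)
  have h_xy_gt : ∑ p ∈ twoProductReps n with p.2.2 < p.1.2, F p.1.1 p.2.1
      = ∑ p ∈ twoProductReps n with p.2.1 < p.1.1, F p.2.1 (p.1.1 - p.2.1) :=
    (sum_filter_swap (fun p => p.1.2 < p.2.2) (fun p => F p.2.1 p.1.1)).trans
      (sum_filter_snd_lt (fun p => F p.2.1 p.1.1))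
  have h_xy_eq : ∑ p ∈ twoProductReps n with p.1.2 = p.2.2, F p.1.1 p.2.1
      = ∑ m ∈ n.divisors, ∑ x ∈ Ico 1 m, F x (m - x) := by
    rw [← Nat.sum_divisorsAntidiagonal' (fun _ m => ∑ x ∈ Ico 1 m, F x (m - x))]
    exact (sum_filter_transpose (fun p => p.1.1 = p.2.1) (fun p => F p.1.2 p.2.2)).trans
      (sum_filter_fst_eq (fun p => F p.1.2 p.2.2))
  rw [h_ab_lt, sum_filter_fst_eq_diag] at h_ab
  rw [h_xy_lt, h_xy_gt, h_xy_eq] at h_xy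
  rw [sum_sub_distrib, sum_sub_distrib, sum_add_distrib]
  refine sub_eq_zero.1 (Eq.trans ?_ (sub_eq_zero.2 (h_ab.symm.trans h_xy)))
  abel

end twoProductReps

theorem sum_Ico_sum_divisors_mul_sum_divisors {R : Type*} [CommSemiring R] (f g : ℕ → R) (n : ℕ) :
    ∑ j ∈ Ico 1 n, (∑ d ∈ j.divisors, f d) * ∑ d ∈ (n - j).divisors, g d
      = ∑ p ∈ twoProductReps n, f p.1.1 * g p.2.1 := by
  have h_expand : ∀ j, (∑ d ∈ j.divisors, f d) * ∑ d ∈ (n - j).divisors, g d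
      = ∑ q ∈ j.divisorsAntidiagonal ×ˢ (n - j).divisorsAntidiagonal, f q.1.1 * g q.2.1 := by
    intro j
    rw [sum_product, ← Nat.sum_divisorsAntidiagonal (fun a _ => f a),
      ← Nat.sum_divisorsAntidiagonal (fun a _ => g a), sum_mul_sum]
  simp only [h_expand]
  rw [sum_sigma']
  refine sum_nbij' (fun q => q.2) (fun p => ⟨p.1.1 * p.1.2, p⟩) ?_ ?_ ?_ (fun _ _ => rfl)
    (fun _ _ => rfl)
  · rintro ⟨j, ⟨a, x⟩, ⟨b, y⟩⟩ hq
    simp only [mem_sigma, mem_Ico, mem_product, Nat.mem_divisorsAntidiagonal] at hq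
    obtain ⟨⟨hj, hjn⟩, ⟨rfl, -⟩, hby, hnj⟩ := hq
    simp only [mem_twoProductReps]
    have ⟨ha, hx⟩ := Nat.mul_ne_zero_iff.1 (show a * x ≠ 0 by omega)
    have ⟨hb, hy⟩ := Nat.mul_ne_zero_iff.1 (show b * y ≠ 0 by omega)
    omega
  · rintro ⟨⟨a, x⟩, ⟨b, y⟩⟩ hp
    simp only [mem_twoProductReps] at hp
    obtain ⟨rfl, ha, hx, hb, hy⟩ := hp
    simp only [mem_sigma, mem_Ico, mem_product, Nat.mem_divisorsAntidiagonal, true_and]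
    have := Nat.mul_pos ha hx
    have := Nat.mul_pos hb hy
    omega
  · rintro ⟨j, ⟨a, x⟩, ⟨b, y⟩⟩ hq
    simp only [mem_sigma, mem_product, Nat.mem_divisorsAntidiagonal] at hq
    obtain ⟨-, ⟨rfl, -⟩, -⟩ := hq
    rfl

theorem sum_range_deltaChar_mul {N : ℕ} (χ : DirichletCharacter ℂ N) {n : ℕ} (hn : 0 < n) :
    ∑ j ∈ range (n + 1), deltaChar χ j * deltaChar χ (n - j)
      = 2 * deltaChar χ 0 * ∑ d ∈ n.divisors, χ d + ∑ p ∈ twoProductReps n, χ p.1.1 * χ p.2.1 := by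
  have h_pos : ∀ m, 0 < m → deltaChar χ m = ∑ d ∈ m.divisors, χ d := fun m hm => if_neg hm.ne'
  have h_mid : ∑ j ∈ Ico 1 n, deltaChar χ j * deltaChar χ (n - j)
      = ∑ p ∈ twoProductReps n, χ p.1.1 * χ p.2.1 := by
    rw [← sum_Ico_sum_divisors_mul_sum_divisors (fun d => χ d) (fun d => χ d)]
    refine sum_congr rfl fun j hj => ?_
    rw [mem_Ico] at hj
    rw [h_pos j (by omega), h_pos (n - j) (by omega)]
  rw [range_eq_Ico, sum_eq_sum_Ico_succ_bot (by omega), sum_Ico_succ_top (by omega), h_mid,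
    Nat.sub_zero, Nat.sub_self, h_pos n hn]
  ring

theorem MulChar.apply_sq_eq_neg_one_of_orderOf_eq_four {R R' : Type*} [CommMonoid R] [CommRing R']
    [NoZeroDivisors R'] {g : Rˣ} (hg : ∀ x, x ∈ Subgroup.zpowers g) {χ : MulChar R R'}
    (hχ : orderOf χ = 4) : χ g ^ 2 = -1 := by
  have h4 : χ g ^ 2 * χ g ^ 2 = 1 := by
    rw [← pow_add, ← MulChar.pow_apply_coe, show 2 + 2 = orderOf χ by omega, pow_orderOf_eq_one,
      MulChar.one_apply_coe]
  have h2 : χ g ^ 2 ≠ 1 := fun h => pow_ne_one_of_lt_orderOf (x := χ) two_ne_zero (by omega)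
    ((MulChar.eq_iff hg _ _).2 (by rw [MulChar.pow_apply_coe, h, MulChar.one_apply_coe]))
  exact (mul_self_eq_one_iff.1 h4).resolve_left h2

namespace Quartic13

local notation "𝐢" => (Zsqrtd.sqrtd : GaussianInt)

def chiZI (a : ZMod 13) : GaussianInt :=
  [0, 1, 𝐢, 1, -1, 𝐢, 𝐢, -𝐢, -𝐢, 1, -1, -𝐢, -1].getD a.val 0

def liouvilleProfile (t : ZMod 13) : GaussianInt :=
  [-2 - 3 * 𝐢, -3 * 𝐢, -𝐢, 2 - 𝐢, -𝐢, 𝐢, 3 * 𝐢, 𝐢, -𝐢, 2 - 𝐢, -𝐢, -3 * 𝐢, -2 - 3 * 𝐢].getD t.val 0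

/-- A solution of the linear system `liouvilleFun_add_swap_sub`. It is ψ-homogeneous,
`h (t * a) (t * b) = ψ t * h a b`, hence determined by `h 0 ·` and the profile `t ↦ h 1 t`;
`a ^ 11` is `a⁻¹` for `a ≠ 0`, written as a power so that `decide` can evaluate it. -/
def liouvilleFun (a b : ZMod 13) : GaussianInt :=
  if a = 0 then chiZI b ^ 2 * liouvilleProfile 0 else chiZI a ^ 2 * liouvilleProfile (b * a ^ 11)

theorem liouvilleFun_add_swap_sub : ∀ a b : ZMod 13,
    liouvilleFun a b + liouvilleFun b a - liouvilleFun (a - b) b - liouvilleFun b (a - b)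
      = 4 * chiZI a * chiZI b := by
  decide

theorem liouvilleFun_zero_left : ∀ b : ZMod 13, liouvilleFun 0 b = -(2 + 3 * 𝐢) * chiZI b ^ 2 := by
  decide

theorem liouvilleFun_self : ∀ a : ZMod 13, liouvilleFun a a = -3 * 𝐢 * chiZI a ^ 2 := by decide

theorem sum_range_liouvilleFun_period : ∀ c : ZMod 13,
    ∑ x ∈ range 13, liouvilleFun (c + x) ((13 - x : ℕ) : ZMod 13) = -13 * 𝐢 * chiZI c ^ 2 := by
  decide

theorem sum_range_liouvilleFun_of_lt : ∀ c : Fin 13,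
    ∑ a ∈ range c, liouvilleFun a ((c - a : ℕ) : ZMod 13)
      = -(𝐢 * (c : ℕ) * chiZI (c : ℕ) ^ 2 + (2 + 2 * 𝐢) * chiZI (c : ℕ)) := by
  decide

theorem chiZI_two_pow : ∀ k : Fin 12, chiZI (2 ^ (k : ℕ)) = 𝐢 ^ (k : ℕ) := by decide

theorem exists_two_pow_eq : ∀ a : ZMod 13, a ≠ 0 → ∃ k : Fin 12, 2 ^ (k : ℕ) = a := by decide

theorem sum_range_chiZI_mul : ∑ a ∈ range 13, chiZI a * a = -13 * (1 + 𝐢) := by decide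

theorem sum_range_liouvilleFun (c : ℕ) :
    ∑ a ∈ range c, liouvilleFun a ((c - a : ℕ) : ZMod 13)
      = -(𝐢 * c * chiZI c ^ 2 + (2 + 2 * 𝐢) * chiZI c) := by
  induction c using Nat.strong_induction_on with | _ c ih =>
  rcases lt_or_ge c 13 with hc | hc
  · exact sum_range_liouvilleFun_of_lt ⟨c, hc⟩
  obtain ⟨c, rfl⟩ : ∃ d, c = d + 13 := ⟨c - 13, by omega⟩
  have h_cast : ((c + 13 : ℕ) : ZMod 13) = c := by
    rw [Nat.cast_add, ZMod.natCast_self, add_zero]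
  have h_head : ∑ a ∈ range c, liouvilleFun a ((c + 13 - a : ℕ) : ZMod 13)
      = ∑ a ∈ range c, liouvilleFun a ((c - a : ℕ) : ZMod 13) := by
    refine sum_congr rfl fun a ha => ?_
    rw [mem_range] at ha
    rw [show c + 13 - a = c - a + 13 by omega, Nat.cast_add, ZMod.natCast_self, add_zero]
  have h_block :
      ∑ x ∈ range 13, liouvilleFun ((c + x : ℕ) : ZMod 13) ((c + 13 - (c + x) : ℕ) : ZMod 13)
      = ∑ x ∈ range 13, liouvilleFun (c + x) ((13 - x : ℕ) : ZMod 13) := by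
    simp only [Nat.add_sub_add_left, Nat.cast_add]
  rw [sum_range_add, h_head, h_block, ih c (by omega), sum_range_liouvilleFun_period, h_cast]
  push_cast
  ring

theorem sum_Ico_liouvilleFun (c : ℕ) :
    ∑ a ∈ Ico 1 c, liouvilleFun a ((c - a : ℕ) : ZMod 13)
      = (2 + 3 * 𝐢) * chiZI c ^ 2 - 𝐢 * c * chiZI c ^ 2 - (2 + 2 * 𝐢) * chiZI c := by
  rcases Nat.eq_zero_or_pos c with rfl | hc
  · decide
  have h_range := sum_range_liouvilleFun c
  rw [sum_range_eq_add_Ico _ hc, Nat.cast_zero, Nat.sub_zero, liouvilleFun_zero_left] at h_range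
  linear_combination h_range

instance : Fact (1 < 13) := ⟨by norm_num⟩

variable {χ : DirichletCharacter ℂ 13}

theorem apply_two_sq (hχ : orderOf χ = 4) : χ 2 ^ 2 = -1 := by
  let g : (ZMod 13)ˣ := ZMod.unitOfCoprime 2 (by norm_num)
  have hg : ∀ x, x ∈ Subgroup.zpowers g := by
    intro x
    obtain ⟨k, hk⟩ := exists_two_pow_eq x x.ne_zero
    have : g ^ (k : ℕ) = x := Units.ext (by simpa [g] using hk)
    exact this ▸ Subgroup.npow_mem_zpowers g k
  simpa [g] using MulChar.apply_sq_eq_neg_one_of_orderOf_eq_four hg hχ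

noncomputable def toComplex (hχ2 : χ 2 ^ 2 = -1) : GaussianInt →+* ℂ :=
  Zsqrtd.lift ⟨χ 2, by push_cast; rw [← sq, hχ2]⟩

theorem toComplex_sqrtd (hχ2 : χ 2 ^ 2 = -1) : toComplex hχ2 𝐢 = χ 2 := by
  simp [toComplex]

theorem toComplex_chiZI (hχ2 : χ 2 ^ 2 = -1) (a : ZMod 13) : toComplex hχ2 (chiZI a) = χ a := by
  by_cases ha : a = 0
  · rw [ha, show chiZI 0 = 0 from rfl, map_zero, MulChar.map_zero]
  obtain ⟨k, rfl⟩ := exists_two_pow_eq a ha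
  rw [chiZI_two_pow, map_pow, map_pow, toComplex_sqrtd]

theorem four_mul_sum_filter_lt (hχ2 : χ 2 ^ 2 = -1) (n : ℕ) :
    4 * ∑ p ∈ twoProductReps n with p.2.1 < p.1.1, χ p.1.1 * χ p.2.1
      = ∑ m ∈ n.divisors, ((2 + 3 * χ 2) * χ m ^ 2 - χ 2 * m * χ m ^ 2 - (2 + 2 * χ 2) * χ m)
        + 3 * χ 2 * ∑ d ∈ n.divisors, (n / d - 1) • χ d ^ 2 := by
  have h := twoProductReps.liouville_identity (n := n) fun a b => toComplex hχ2 (liouvilleFun a b)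
  have h_off : ∀ p ∈ {p ∈ twoProductReps n | p.2.1 < p.1.1},
      toComplex hχ2 (liouvilleFun p.1.1 p.2.1) + toComplex hχ2 (liouvilleFun p.2.1 p.1.1)
        - toComplex hχ2 (liouvilleFun ((p.1.1 - p.2.1 : ℕ) : ZMod 13) p.2.1)
        - toComplex hχ2 (liouvilleFun p.2.1 ((p.1.1 - p.2.1 : ℕ) : ZMod 13))
      = 4 * (χ p.1.1 * χ p.2.1) := by
    intro p hp
    rw [mem_filter] at hp
    rw [Nat.cast_sub hp.2.le, ← map_add, ← map_sub, ← map_sub, liouvilleFun_add_swap_sub]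
    simp only [map_mul, map_ofNat, toComplex_chiZI, mul_assoc]
  have h_line : ∀ m : ℕ, ∑ x ∈ Ico 1 m, toComplex hχ2 (liouvilleFun x ((m - x : ℕ) : ZMod 13))
      = (2 + 3 * χ 2) * χ m ^ 2 - χ 2 * m * χ m ^ 2 - (2 + 2 * χ 2) * χ m := by
    intro m
    rw [← map_sum, sum_Ico_liouvilleFun]
    simp only [map_sub, map_mul, map_add, map_pow, map_ofNat, map_natCast, toComplex_chiZI,
      toComplex_sqrtd]
  have h_diag : ∀ d : ℕ, toComplex hχ2 (liouvilleFun d d) = -3 * χ 2 * χ d ^ 2 := by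
    intro d
    rw [liouvilleFun_self]
    simp only [map_mul, map_neg, map_ofNat, map_pow, toComplex_chiZI, toComplex_sqrtd]
  rw [sum_congr rfl h_off, ← mul_sum] at h
  simp only [h_line, h_diag, ← mul_smul_comm, ← mul_sum] at h
  rw [h]
  ring

theorem sum_twoProductReps_mul (hχ2 : χ 2 ^ 2 = -1) (n : ℕ) :
    ∑ p ∈ twoProductReps n, χ p.1.1 * χ p.2.1
      = -(χ 2 / 2) * ∑ d ∈ n.divisors, χ d ^ 2 * d
        + (2 + 3 * χ 2) / 2 * ∑ d ∈ n.divisors, χ d ^ 2 * (n / d : ℕ)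
        - (1 + χ 2) * ∑ d ∈ n.divisors, χ d := by
  have h_symm := twoProductReps.sum_of_symm (n := n) (fun a b => χ a * χ b) fun _ _ => mul_comm _ _
  simp only [← sq] at h_symm
  have h_lines :
      ∑ m ∈ n.divisors, ((2 + 3 * χ 2) * χ m ^ 2 - χ 2 * m * χ m ^ 2 - (2 + 2 * χ 2) * χ m)
      = (2 + 3 * χ 2) * ∑ d ∈ n.divisors, χ d ^ 2 - χ 2 * ∑ d ∈ n.divisors, χ d ^ 2 * d
        - (2 + 2 * χ 2) * ∑ d ∈ n.divisors, χ d := by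
    simp only [mul_sum, ← sum_sub_distrib]
    exact sum_congr rfl fun _ _ => by ring
  have h_diag : ∑ d ∈ n.divisors, (n / d - 1) • χ d ^ 2
      = ∑ d ∈ n.divisors, χ d ^ 2 * (n / d : ℕ) - ∑ d ∈ n.divisors, χ d ^ 2 := by
    rw [← sum_sub_distrib]
    refine sum_congr rfl fun d hd => ?_
    rw [nsmul_eq_mul, Nat.cast_sub (Nat.div_pos (Nat.divisor_le hd) (Nat.pos_of_mem_divisors hd))]
    ring
  linear_combination h_symm + (1 / 2 : ℂ) * four_mul_sum_filter_lt hχ2 n + (1 / 2 : ℂ) * h_lines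
    + (1 + 3 / 2 * χ 2) * h_diag

theorem deltaChar_zero (hχ2 : χ 2 ^ 2 = -1) : deltaChar χ 0 = (1 + χ 2) / 2 := by
  have h_sum : ∑ a ∈ range 13, χ a * a = toComplex hχ2 (∑ a ∈ range 13, chiZI a * a) := by
    simp only [map_sum, map_mul, toComplex_chiZI, map_natCast]
  rw [deltaChar, if_pos rfl, h_sum, sum_range_chiZI_mul]
  simp only [map_mul, map_add, map_neg, map_ofNat, map_one, toComplex_sqrtd]
  ring

end Quartic13

theorem farkas_quartic_p13_second (χ : DirichletCharacter ℂ 13) (hχ : orderOf χ = 4) (n : ℕ) :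
    ∑ j ∈ Finset.range (n + 1), deltaChar χ j * deltaChar χ (n - j)
      = -(χ 2 / 2) * sigmaTilde (χ ^ 2) (-1) n
        + ((2 + 3 * χ 2) / 2) * sigmaHat (χ ^ 2) n := by
  have hχ2 := Quartic13.apply_two_sq hχ
  rcases Nat.eq_zero_or_pos n with rfl | hn
  · simp only [zero_add, range_one, sum_singleton, Nat.sub_zero, Quartic13.deltaChar_zero hχ2,
      sigmaTilde, sigmaHat, if_pos]
    linear_combination (1 / 4 : ℂ) * hχ2
  rw [sum_range_deltaChar_mul χ hn, Quartic13.sum_twoProductReps_mul hχ2,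
    Quartic13.deltaChar_zero hχ2, sigmaTilde, sigmaHat, if_neg hn.ne', if_neg hn.ne']
  simp only [MulChar.pow_apply' χ two_ne_zero]
  ring
end

section
/- Let q ≡ 1 (mod 4) be a prime such that p = 2q + 1 is also prime, and let χ be an even Dirichlet character modulo p (i.e. χ(−1) = 1). Then there is no real number α such that ∑_{j=0}^{n} δ_χ(j)·δ_{χ̄}(n−j) = α·σ'_p(n) holds for all integers n ≥ 1. -/
open Finset

/-- The complex-conjugate character `χ̄`. -/
noncomputable def conjChar {N : ℕ} (χ : DirichletCharacter ℂ N) : DirichletCharacter ℂ N :=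
  χ.ringHomComp (starRingEnd ℂ)

/-- `σ'_p(n) = ∑_{0<d∣n, p∤d} d` for `n ≥ 1`. -/
noncomputable def sigma'pos (p : ℕ) (n : ℕ) : ℂ :=
  ∑ d ∈ n.divisors.filter (fun d => ¬ p ∣ d), (d : ℂ)

/-!
Only `n = 1` and `n = 2` are needed. With `c = δ_χ(0)` the identity there reads
`c + c̄ = α` and `c (1 + χ̄(2)) + 1 + (1 + χ(2)) c̄ = 3α`.
For a nontrivial even `χ`, the reflection `a ↦ p - a` and `∑ χ(a) = 0` give `∑ χ(a) a = 0`,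
so `c = 0` and the equations say `1 = 0`.
For the trivial character `c` is real and `χ(2) = 1`, which forces `c = 1/2`;
but `c = -(1/2p) ∑_{(a,p)=1} a ≤ 0`.
-/

lemma deltaChar_zero_def {N : ℕ} (χ : DirichletCharacter ℂ N) :
    deltaChar χ 0 = -(1 / (2 * (N : ℂ))) * ∑ a ∈ range N, χ a * a := if_pos rfl

lemma deltaChar_one {N : ℕ} (χ : DirichletCharacter ℂ N) : deltaChar χ 1 = 1 := by
  simp [deltaChar]

lemma deltaChar_two {N : ℕ} (χ : DirichletCharacter ℂ N) : deltaChar χ 2 = 1 + χ 2 := by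
  rw [deltaChar, if_neg two_ne_zero, Nat.prime_two.divisors, sum_pair (by norm_num)]
  simp

lemma sigma'pos_one {p : ℕ} (hp : 1 < p) : sigma'pos p 1 = 1 := by
  have h1 : ¬p ∣ 1 := fun h => hp.ne' (Nat.dvd_one.mp h)
  rw [sigma'pos, Nat.divisors_one, filter_singleton, if_pos h1, sum_singleton, Nat.cast_one]

lemma sigma'pos_two {p : ℕ} (hp : 2 < p) : sigma'pos p 2 = 3 := by
  have h1 : ¬p ∣ 1 := fun h => by have := Nat.le_of_dvd one_pos h; omega
  have h2 : ¬p ∣ 2 := fun h => by have := Nat.le_of_dvd two_pos h; omega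
  rw [sigma'pos, Nat.prime_two.divisors, filter_insert, if_pos h1, filter_singleton, if_pos h2,
    sum_pair (by norm_num)]
  norm_num

lemma conjChar_one {N : ℕ} : conjChar (1 : DirichletCharacter ℂ N) = 1 :=
  MulChar.ringHomComp_one _

lemma deltaChar_conjChar_zero {N : ℕ} (χ : DirichletCharacter ℂ N) :
    deltaChar (conjChar χ) 0 = starRingEnd ℂ (deltaChar χ 0) := by
  simp [deltaChar_zero_def, conjChar, map_sum, map_ofNat]

lemma sum_range_deltaChar_mul_one {N : ℕ} (χ ψ : DirichletCharacter ℂ N) :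
    ∑ j ∈ range (1 + 1), deltaChar χ j * deltaChar ψ (1 - j)
      = deltaChar χ 0 + deltaChar ψ 0 := by
  simp [sum_range_succ, deltaChar_one]

lemma sum_range_deltaChar_mul_two {N : ℕ} (χ ψ : DirichletCharacter ℂ N) :
    ∑ j ∈ range (2 + 1), deltaChar χ j * deltaChar ψ (2 - j)
      = deltaChar χ 0 * (1 + ψ 2) + 1 + (1 + χ 2) * deltaChar ψ 0 := by
  simp [sum_range_succ, deltaChar_one, deltaChar_two]

lemma DirichletCharacter.one_apply_two {R : Type*} [CommMonoidWithZero R] {N : ℕ}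
    (hN : _root_.Odd N) : (1 : DirichletCharacter R N) 2 = 1 :=
  MulChar.one_apply <| by
    exact_mod_cast (ZMod.isUnit_iff_coprime 2 N).mpr (Nat.coprime_two_left.mpr hN)

lemma sum_range_eq_sum_zmod_val {M : Type*} [AddCommMonoid M] {N : ℕ} [NeZero N]
    (f : ZMod N → ℕ → M) : ∑ a ∈ range N, f a a = ∑ b : ZMod N, f b b.val := by
  refine sum_nbij' (fun a => (a : ZMod N)) ZMod.val (fun _ _ => mem_univ _)
    (fun b _ => mem_range.mpr b.val_lt) (fun a ha => ZMod.val_cast_of_lt (mem_range.mp ha))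
    (fun b _ => ZMod.natCast_zmod_val b) (fun a ha => ?_)
  rw [ZMod.val_cast_of_lt (mem_range.mp ha)]

lemma sum_range_mul_eq_zero_of_even {N : ℕ} (hN : 1 < N) {χ : DirichletCharacter ℂ N}
    (hχ : χ.Even) (hχ1 : χ ≠ 1) : ∑ a ∈ range N, χ a * a = 0 := by
  have : Fact (1 < N) := ⟨hN⟩
  rw [sum_range_eq_sum_zmod_val fun b a => χ b * a]
  set T := ∑ b : ZMod N, χ b * (b.val : ℂ)
  have hreflect : T = ∑ b : ZMod N, χ b * ((N : ℂ) - b.val) := by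
    refine (Fintype.sum_equiv (Equiv.neg (ZMod N)) _ _ fun _ => rfl).symm.trans
      (sum_congr rfl fun b _ => ?_)
    rcases eq_or_ne b 0 with rfl | hb
    · simp [χ.map_zero]
    · rw [Equiv.neg_apply, hχ.eval_neg, ZMod.neg_val, if_neg hb, Nat.cast_sub b.val_lt.le]
  have hT : T = -T := by
    conv_lhs => rw [hreflect]
    simp only [mul_sub, sum_sub_distrib, ← sum_mul, MulChar.sum_eq_zero_of_ne_one hχ1, zero_mul,
      zero_sub]
    rfl
  exact add_self_eq_zero.mp (by linear_combination hT)

lemma deltaChar_one_zero_re_nonpos (N : ℕ) :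
    (deltaChar (1 : DirichletCharacter ℂ N) 0).re ≤ 0 := by
  classical
  have hterm : ∀ a : ℕ, (1 : DirichletCharacter ℂ N) a * a
      = ((if IsUnit (a : ZMod N) then a else 0 : ℕ) : ℂ) := by
    intro a
    split_ifs with ha
    · simp [MulChar.one_apply ha]
    · simp [MulChar.map_nonunit _ ha]
  simp only [deltaChar_zero_def, hterm, ← Nat.cast_sum]
  generalize ∑ a ∈ range N, (if IsUnit (a : ZMod N) then a else 0) = m
  rw [show -(1 / (2 * (N : ℂ))) * m = ((-(m / (2 * N)) : ℝ) : ℂ) by push_cast; ring,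
    Complex.ofReal_re, neg_nonpos]
  positivity

theorem no_identity_even_character_general (q : ℕ)
    (hp : (2 * q + 1).Prime) (χ : DirichletCharacter ℂ (2 * q + 1))
    (hχeven : χ (-1) = 1) :
    ¬ ∃ α : ℝ, ∀ n : ℕ, 1 ≤ n →
      ∑ j ∈ Finset.range (n + 1), deltaChar χ j * deltaChar (conjChar χ) (n - j)
        = (α : ℂ) * sigma'pos (2 * q + 1) n := by
  rintro ⟨α, h⟩
  have hp2 : 2 < 2 * q + 1 := by have := hp.two_le; omega
  have h1 := h 1 le_rfl
  have h2 := h 2 one_le_two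
  rw [sum_range_deltaChar_mul_one, sigma'pos_one hp.one_lt] at h1
  rw [sum_range_deltaChar_mul_two, sigma'pos_two hp2] at h2
  by_cases hχ1 : χ = 1
  · subst hχ1
    rw [conjChar_one] at h1 h2
    rw [DirichletCharacter.one_apply_two (odd_two_mul_add_one q)] at h2
    have hhalf : deltaChar (1 : DirichletCharacter ℂ (2 * q + 1)) 0 = 1 / 2 := by
      linear_combination (-1 / 2 : ℂ) * h2 + (3 / 2 : ℂ) * h1
    have hre := deltaChar_one_zero_re_nonpos (2 * q + 1)
    norm_num [hhalf] at hre
  · have hzero : deltaChar χ 0 = 0 := by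
      rw [deltaChar_zero_def, sum_range_mul_eq_zero_of_even hp.one_lt hχeven hχ1, mul_zero]
    rw [deltaChar_conjChar_zero, hzero, map_zero] at h1 h2
    exact one_ne_zero (by linear_combination h2 - 3 * h1 : (1 : ℂ) = 0)

theorem no_identity_even_character (q : ℕ) (hq : q.Prime) (hq4 : q % 4 = 1)
    (hp : (2 * q + 1).Prime) (χ : DirichletCharacter ℂ (2 * q + 1))
    (hχeven : χ (-1) = 1) :
    ¬ ∃ α : ℝ, ∀ n : ℕ, 1 ≤ n →
      ∑ j ∈ Finset.range (n + 1), deltaChar χ j * deltaChar (conjChar χ) (n - j)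
        = (α : ℂ) * sigma'pos (2 * q + 1) n :=
  no_identity_even_character_general q hp χ hχeven
end
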